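/- arXiv:1908.11040 — 3 statements merged into one kernel-verified Lean document; each statement's English description precedes it below -/
import Mathlib

section
/- Let $(\phi_t)$ be a measure-preserving flow on a probability space $(M,\mu)$, $f \in L^2(M,\mu)$ with spectral measure $\sigma_f$. Suppose there exist $C>0$, $T_0>0$ and $0 \le \alpha_+ < 1$ such that for all $T \ge T_0$, $\big\| \int_0^T e^{-2\pi i\lambda t} f\circ\phi_t\, dt \big\|_{L^2} \ge C^{-1} T^{1-\alpha_+}$. Then there exist $C'>0$ and $r_0>0$ such that for all $0 < r < r_0$, $\sigma_f([\lambda - r, \lambda + r]) \ge (C')^{-1} r^{2\alpha_+/(1-\alpha_+)}$. In particular the upper local dimension satisfies $\overline{d}_f(\lambda) := \limsup_{r\to 0^+} \frac{\log \sigma_f([\lambda-r,\lambda+r])}{\log r} \le \frac{2\alpha_+}{1-\alpha_+}$. -/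
/-!
The kernel `K T ξ` is at most `T²` everywhere and at most `(π |ξ - λ|)⁻²` away from `λ`, so the
spectral identity gives `F T ² ≤ T² σ[λ - r, λ + r] + σ(ℝ) / (π r)²`. Choosing
`T ≍ r ^ (-1 / (1 - α))` makes the lower bound `C⁻² T ^ (2 - 2α)` at least twice the tail, which
leaves `σ[λ - r, λ + r] ≥ C⁻² T ^ (-2α) / 2 ≍ r ^ (2α / (1 - α))`. Taking logarithms bounds the
upper local dimension.
-/

open MeasureTheory Real Set Filter Topology

namespace Complex

lemma norm_exp_neg_ofReal_mul_I_sub_one_le_abs (x : ℝ) :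
    ‖exp (-(x : ℂ) * I) - 1‖ ≤ |x| := by
  simpa [mul_comm] using Real.norm_exp_I_mul_ofReal_sub_one_le (x := -x)

lemma norm_exp_neg_ofReal_mul_I_sub_one_le_two (x : ℝ) :
    ‖exp (-(x : ℂ) * I) - 1‖ ≤ 2 := by
  calc ‖exp (-(x : ℂ) * I) - 1‖ ≤ ‖exp (↑(-x) * I)‖ + ‖(1 : ℂ)‖ := by
        push_cast; exact norm_sub_le _ _
    _ = 2 := by rw [norm_exp_ofReal_mul_I]; norm_num

lemma norm_ofReal_mul_I (c : ℝ) : ‖(c : ℂ) * I‖ = |c| := by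
  rw [norm_mul, norm_I, mul_one, norm_real, Real.norm_eq_abs]

lemma norm_exp_neg_mul_I_sub_one_div_le (c T : ℝ) (hT : 0 ≤ T) :
    ‖(exp (-((c * T : ℝ) : ℂ) * I) - 1) / ((c : ℂ) * I)‖ ≤ T := by
  rw [norm_div, norm_ofReal_mul_I]
  rcases eq_or_ne c 0 with rfl | hc
  · simpa using hT
  rw [div_le_iff₀ (abs_pos.mpr hc)]
  calc _ ≤ |c * T| := norm_exp_neg_ofReal_mul_I_sub_one_le_abs _
    _ = T * |c| := by rw [abs_mul, abs_of_nonneg hT, mul_comm]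

lemma norm_exp_neg_mul_I_sub_one_div_le_two_div (c T : ℝ) :
    ‖(exp (-((c * T : ℝ) : ℂ) * I) - 1) / ((c : ℂ) * I)‖ ≤ 2 / |c| := by
  rw [norm_div, norm_ofReal_mul_I]
  exact div_le_div_of_nonneg_right (norm_exp_neg_ofReal_mul_I_sub_one_le_two _) (abs_nonneg c)

end Complex

theorem MeasureTheory.integral_le_of_le_on_of_le_compl {α : Type*} [MeasurableSpace α]
    (μ : Measure α) [IsFiniteMeasure μ] {k : α → ℝ} {s : Set α} (hs : MeasurableSet s)
    {a b : ℝ} (hb : 0 ≤ b) (hk : ∀ x, 0 ≤ k x) (hks : ∀ x ∈ s, k x ≤ a)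
    (hksc : ∀ x ∉ s, k x ≤ b) :
    ∫ x, k x ∂μ ≤ a * μ.real s + b * μ.real univ := by
  have hint : Integrable (fun x => s.indicator (fun _ => a) x + b) μ :=
    ((integrable_const a).indicator hs).add (integrable_const b)
  have hle : ∀ x, k x ≤ s.indicator (fun _ => a) x + b := by
    intro x
    by_cases hx : x ∈ s
    · rw [indicator_of_mem hx]; linarith [hks x hx]
    · rw [indicator_of_notMem hx, zero_add]; exact hksc x hx
  calc ∫ x, k x ∂μ ≤ ∫ x, (s.indicator (fun _ => a) x + b) ∂μ :=
        integral_mono_of_nonneg (.of_forall hk) hint (.of_forall hle)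
    _ = a * μ.real s + b * μ.real univ := by
        rw [integral_add ((integrable_const a).indicator hs) (integrable_const b),
          integral_indicator_const a hs, integral_const, smul_eq_mul, smul_eq_mul, mul_comm,
          mul_comm (μ.real univ)]

section SpectralKernel

variable {σ : Measure ℝ} {lam : ℝ} {F : ℝ → ℝ} {K : ℝ → ℝ → ℝ}
  (hKdiag : ∀ T : ℝ, K T lam = T ^ 2)
  (hKoff : ∀ T ξ : ℝ, ξ ≠ lam →
    K T ξ = ‖(Complex.exp (-(((2 * π * (lam - ξ) * T : ℝ) : ℂ)) * Complex.I) - 1) /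
      (((2 * π * (lam - ξ) : ℝ) : ℂ) * Complex.I)‖ ^ 2)
include hKoff

lemma kernel_le_inv_sq (T : ℝ) {ξ : ℝ} (hξ : ξ ≠ lam) : K T ξ ≤ (π * |ξ - lam|)⁻¹ ^ 2 := by
  rw [hKoff T ξ hξ]
  refine pow_le_pow_left₀ (norm_nonneg _) ?_ 2
  calc _ ≤ 2 / |2 * π * (lam - ξ)| := Complex.norm_exp_neg_mul_I_sub_one_div_le_two_div _ _
    _ = (π * |ξ - lam|)⁻¹ := by
        rw [abs_mul, abs_mul, abs_two, abs_of_pos pi_pos, abs_sub_comm]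
        field_simp

include hKdiag

lemma kernel_nonneg (T ξ : ℝ) : 0 ≤ K T ξ := by
  rcases eq_or_ne ξ lam with rfl | hξ
  · rw [hKdiag]; positivity
  · rw [hKoff T ξ hξ]; positivity

lemma kernel_le_sq {T : ℝ} (hT : 0 ≤ T) (ξ : ℝ) : K T ξ ≤ T ^ 2 := by
  rcases eq_or_ne ξ lam with rfl | hξ
  · rw [hKdiag]
  · rw [hKoff T ξ hξ]
    exact pow_le_pow_left₀ (norm_nonneg _) (Complex.norm_exp_neg_mul_I_sub_one_div_le _ _ hT) 2

variable [IsFiniteMeasure σ] (hspec : ∀ T : ℝ, 0 < T → F T ^ 2 = ∫ ξ : ℝ, K T ξ ∂σ)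
include hspec

lemma sq_le_measureReal_Icc_add {T r : ℝ} (hT : 0 < T) (hr : 0 < r) :
    F T ^ 2 ≤ T ^ 2 * σ.real (Icc (lam - r) (lam + r)) + (π * r)⁻¹ ^ 2 * σ.real univ := by
  rw [hspec T hT]
  refine integral_le_of_le_on_of_le_compl σ measurableSet_Icc (by positivity)
    (kernel_nonneg hKdiag hKoff T) (fun ξ _ => kernel_le_sq hKdiag hKoff hT.le ξ) fun ξ hξ => ?_
  have hfar : r < |ξ - lam| := by
    rw [mem_Icc, not_and_or, not_le, not_le] at hξ
    rw [lt_abs]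
    rcases hξ with h | h
    · right; linarith
    · left; linarith
  have hne : ξ ≠ lam := by rintro rfl; simp at hfar; linarith
  calc K T ξ ≤ (π * |ξ - lam|)⁻¹ ^ 2 := kernel_le_inv_sq hKoff T hne
    _ ≤ (π * r)⁻¹ ^ 2 := by gcongr

lemma div_sq_div_two_le_measureReal_Icc {T r G : ℝ} (hT : 0 < T) (hr : 0 < r) (hG : 0 ≤ G)
    (hGF : G ≤ F T) (htail : 2 * ((π * r)⁻¹ ^ 2 * σ.real univ) ≤ G ^ 2) :
    (G / T) ^ 2 / 2 ≤ σ.real (Icc (lam - r) (lam + r)) := by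
  have hsplit := sq_le_measureReal_Icc_add hKdiag hKoff hspec hT hr
  have hGF2 : G ^ 2 ≤ F T ^ 2 := pow_le_pow_left₀ hG hGF 2
  rw [div_pow, div_div, div_le_iff₀ (by positivity)]
  nlinarith

lemma exists_rpow_le_measureReal_Icc {C T0 α : ℝ} (hC : 0 < C) (hα1 : α < 1)
    (hbound : ∀ T : ℝ, T0 ≤ T → C⁻¹ * T ^ (1 - α) ≤ F T) :
    ∃ D : ℝ, 0 < D ∧ ∀ r : ℝ, 0 < r → r < 1 →
      D⁻¹ * r ^ (2 * α / (1 - α)) ≤ σ.real (Icc (lam - r) (lam + r)) := by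
  have h1α : 0 < 1 - α := by linarith
  set M := σ.real univ
  set x := √(2 * M) * C / π
  set A := max 1 (max T0 (x ^ (1 - α)⁻¹))
  have hA : 0 < A := one_pos.trans_le (le_max_left _ _)
  have hA_tail : 2 * M ≤ (π * C⁻¹ * A ^ (1 - α)) ^ 2 := by
    have hxA : x ≤ A ^ (1 - α) := by
      calc x = (x ^ (1 - α)⁻¹) ^ (1 - α) := (rpow_inv_rpow (by positivity) h1α.ne').symm
        _ ≤ A ^ (1 - α) := by
          gcongr
          exact (le_max_right _ _).trans (le_max_right _ _)
    calc 2 * M = (π * C⁻¹ * x) ^ 2 := by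
          rw [show π * C⁻¹ * x = √(2 * M) by simp only [x]; field_simp, sq_sqrt (by positivity)]
      _ ≤ (π * C⁻¹ * A ^ (1 - α)) ^ 2 := by gcongr
  refine ⟨((C⁻¹ * A ^ (-α)) ^ 2 / 2)⁻¹, by positivity, fun r hr hr1 => ?_⟩
  rw [inv_inv]
  -- This choice makes `C⁻¹ * T ^ (1 - α)` a constant multiple of `r⁻¹`, the order of the tail.
  set T := A * r ^ (-(1 - α)⁻¹)
  have hT : 0 < T := by positivity
  have hTT0 : T0 ≤ T := by
    have hs : 1 ≤ r ^ (-(1 - α)⁻¹) :=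
      one_le_rpow_of_pos_of_le_one_of_nonpos hr hr1.le (by simp [h1α.le])
    exact ((le_max_left _ _).trans (le_max_right _ _)).trans (le_mul_of_one_le_right hA.le hs)
  have hT_pow : T ^ (1 - α) = A ^ (1 - α) * r⁻¹ := by
    rw [mul_rpow hA.le (by positivity), ← rpow_mul hr.le, neg_mul, inv_mul_cancel₀ h1α.ne',
      rpow_neg_one]
  have hT_div : T ^ (1 - α) / T = A ^ (-α) * r ^ (α / (1 - α)) := by
    rw [← rpow_sub_one hT.ne', mul_rpow hA.le (by positivity), ← rpow_mul hr.le]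
    congr 2 <;> field_simp <;> ring
  have htail : 2 * ((π * r)⁻¹ ^ 2 * M) ≤ (C⁻¹ * T ^ (1 - α)) ^ 2 := by
    calc 2 * ((π * r)⁻¹ ^ 2 * M) = (π * r)⁻¹ ^ 2 * (2 * M) := by ring
      _ ≤ (π * r)⁻¹ ^ 2 * (π * C⁻¹ * A ^ (1 - α)) ^ 2 := by gcongr
      _ = (C⁻¹ * T ^ (1 - α)) ^ 2 := by rw [hT_pow]; field_simp
  calc (C⁻¹ * A ^ (-α)) ^ 2 / 2 * r ^ (2 * α / (1 - α))
      = (C⁻¹ * (T ^ (1 - α) / T)) ^ 2 / 2 := by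
        have hr2 : r ^ (2 * α / (1 - α)) = (r ^ (α / (1 - α))) ^ 2 := by
          rw [← rpow_natCast, ← rpow_mul hr.le]
          ring_nf
        rw [hT_div, hr2]
        ring
    _ ≤ σ.real (Icc (lam - r) (lam + r)) := by
        rw [← mul_div_assoc]
        exact div_sq_div_two_le_measureReal_Icc hKdiag hKoff hspec hT hr (by positivity)
          (hbound T hTT0) htail

end SpectralKernel

theorem limsup_log_div_log_le_of_rpow_le {g : ℝ → ℝ} {c β M : ℝ} (hc : 0 < c)
    (hlow : ∀ᶠ r in 𝓝[>] 0, c * r ^ β ≤ g r) (hup : ∀ r, g r ≤ M) :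
    limsup (fun r => log (g r) / log r) (𝓝[>] 0) ≤ β := by
  have hdiv : ∀ a : ℝ, Tendsto (fun r => a / log r) (𝓝[>] 0) (𝓝 0) := fun a =>
    tendsto_const_nhds.div_atBot tendsto_log_nhdsGT_zero
  have hlim : Tendsto (fun r => β + log c / log r) (𝓝[>] 0) (𝓝 β) := by
    simpa using tendsto_const_nhds.add (hdiv (log c))
  have hev : ∀ᶠ r in 𝓝[>] (0 : ℝ), 0 < g r ∧ log r < 0 ∧ c * r ^ β ≤ g r := by
    filter_upwards [hlow, Ioo_mem_nhdsGT one_pos] with r hcg ⟨hr0, hr1⟩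
    exact ⟨(by positivity : 0 < c * r ^ β).trans_le hcg, log_neg hr0 hr1, hcg⟩
  have hle : ∀ᶠ r in 𝓝[>] 0, log (g r) / log r ≤ β + log c / log r := by
    filter_upwards [hev, self_mem_nhdsWithin] with r ⟨hg, hlogr, hcg⟩ (hr : 0 < r)
    have hlog : log c + β * log r ≤ log (g r) := by
      rw [← log_rpow hr, ← log_mul hc.ne' (by positivity)]
      exact log_le_log (by positivity) hcg
    rw [div_le_iff_of_neg hlogr, add_mul, div_mul_cancel₀ _ hlogr.ne]
    linarith
  have hge : ∀ᶠ r in 𝓝[>] 0, -1 ≤ log (g r) / log r := by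
    filter_upwards [hev, (hdiv (log M)).eventually (eventually_gt_nhds neg_one_lt_zero)]
      with r ⟨hg, hlogr, _⟩ hM
    exact hM.le.trans ((div_le_div_right_of_neg hlogr).mpr (log_le_log hg (hup r)))
  calc limsup (fun r => log (g r) / log r) (𝓝[>] 0)
      ≤ limsup (fun r => β + log c / log r) (𝓝[>] 0) :=
        limsup_le_limsup hle (isCoboundedUnder_le_of_eventually_le _ hge) hlim.isBoundedUnder_le
    _ = β := hlim.limsup_eq

theorem stmt3_general (σ : Measure ℝ) [IsFiniteMeasure σ] (lam : ℝ)
    (F : ℝ → ℝ) (K : ℝ → ℝ → ℝ)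
    (hKdiag : ∀ T : ℝ, K T lam = T ^ 2)
    (hKoff : ∀ T ξ : ℝ, ξ ≠ lam →
      K T ξ = ‖(Complex.exp (-(((2 * π * (lam - ξ) * T : ℝ) : ℂ)) * Complex.I) - 1) /
        (((2 * π * (lam - ξ) : ℝ) : ℂ) * Complex.I)‖ ^ 2)
    (hspec : ∀ T : ℝ, 0 < T → F T ^ 2 = ∫ ξ : ℝ, K T ξ ∂σ)
    (C T0 α : ℝ) (hC : 0 < C) (hα1 : α < 1)
    (hbound : ∀ T : ℝ, T0 ≤ T → C⁻¹ * T ^ (1 - α) ≤ F T) :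
    (∃ C' : ℝ, 0 < C' ∧ ∃ r0 : ℝ, 0 < r0 ∧ ∀ r : ℝ, 0 < r → r < r0 →
      C'⁻¹ * r ^ (2 * α / (1 - α)) ≤ (σ (Icc (lam - r) (lam + r))).toReal) ∧
    limsup (fun r : ℝ => Real.log ((σ (Icc (lam - r) (lam + r))).toReal) / Real.log r)
        (nhdsWithin 0 (Ioi 0)) ≤ 2 * α / (1 - α) := by
  obtain ⟨D, hD, hlow⟩ := exists_rpow_le_measureReal_Icc hKdiag hKoff hspec hC hα1 hbound
  refine ⟨⟨D, hD, 1, one_pos, hlow⟩, limsup_log_div_log_le_of_rpow_le (inv_pos.mpr hD) ?_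
    fun r => measureReal_mono (subset_univ _)⟩
  filter_upwards [Ioo_mem_nhdsGT one_pos] with r ⟨hr0, hr1⟩
  exact hlow r hr0 hr1

/-- If the `L²` norm `F T` of the twisted ergodic integral satisfies the spectral
identity (kernel `K`, equal to `T²` at `ξ = λ`) together with `σ(ℝ) = ‖f‖²` and the lower bound
`F T ≥ C⁻¹ T^{1-α₊}` for `T ≥ T₀` with `0 ≤ α₊ < 1`, then there are `C' > 0` and `r₀ > 0` with
`σ_f([λ-r, λ+r]) ≥ (C')⁻¹ r^{2α₊/(1-α₊)}` for `0 < r < r₀`; in particular the upper local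
dimension of `σ_f` at `λ` is at most `2α₊/(1-α₊)`. -/
theorem stmt3 (σ : Measure ℝ) [IsFiniteMeasure σ] (lam : ℝ)
    (F : ℝ → ℝ) (K : ℝ → ℝ → ℝ) (normf : ℝ)
    (hFnn : ∀ T, 0 ≤ F T)
    (hKdiag : ∀ T : ℝ, K T lam = T ^ 2)
    (hKoff : ∀ T ξ : ℝ, ξ ≠ lam →
      K T ξ = ‖(Complex.exp (-(((2 * π * (lam - ξ) * T : ℝ) : ℂ)) * Complex.I) - 1) /
        (((2 * π * (lam - ξ) : ℝ) : ℂ) * Complex.I)‖ ^ 2)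
    (hspec : ∀ T : ℝ, 0 < T → F T ^ 2 = ∫ ξ : ℝ, K T ξ ∂σ)
    (hmass : (σ Set.univ).toReal = normf ^ 2)
    (C T0 α : ℝ) (hC : 0 < C) (hT0 : 0 < T0) (hα0 : 0 ≤ α) (hα1 : α < 1)
    (hbound : ∀ T : ℝ, T0 ≤ T → C⁻¹ * T ^ (1 - α) ≤ F T) :
    (∃ C' : ℝ, 0 < C' ∧ ∃ r0 : ℝ, 0 < r0 ∧ ∀ r : ℝ, 0 < r → r < r0 →
      C'⁻¹ * r ^ (2 * α / (1 - α)) ≤ (σ (Icc (lam - r) (lam + r))).toReal) ∧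
    limsup (fun r : ℝ => Real.log ((σ (Icc (lam - r) (lam + r))).toReal) / Real.log r)
        (nhdsWithin 0 (Ioi 0)) ≤ 2 * α / (1 - α) :=
  stmt3_general σ lam F K hKdiag hKoff hspec C T0 α hC hα1 hbound
end

section
/- Let $\sigma$ be a finite positive measure on $\mathbb{R}$, $\lambda\in\mathbb{R}$, and suppose there exist $C>0$, $r_0>0$, and $0 \le \beta \le 1$ such that $\sigma([\lambda-r,\lambda+r]) \le C r^{2\beta}$ for all $0 < r \le r_0$. Assume $\beta < 1$. Then there exists $C'>0$ such that for all $T \ge 1/r_0$, $T^2 \int_{\mathbb{R}} \Big|\frac{e^{-2\pi i (\lambda-\xi)T} - 1}{2\pi i (\lambda-\xi) T}\Big|^2 d\sigma(\xi) \le C'\, T^{2(1-\beta)}$. -/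
/-!
With `θ = 2π(λ - ξ)T` the integrand is `(2 - 2 cos θ)/θ² ≤ min 1 (4/θ²)`, so it is at most twice
the Lorentzian `(1 + (πT(λ - ξ))²)⁻¹`. By the layer-cake formula, the σ-integral of the
Lorentzian is `∫₀¹ σ{Lorentzian > t} dt`, and the superlevel set at height `t` lies in the
interval of radius `(πT√t)⁻¹` about `λ`, of measure `≲ T^{-2β} t^{-β}`; as `β < 1` this is
integrable on `(0, 1)`. Since σ is finite, the growth bound assumed for `r ≤ r₀` holds for all
`r > 0` after enlarging `C`.
-/

open MeasureTheory Real Set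

lemma norm_exp_neg_mul_I_sub_one_sq (θ : ℝ) :
    ‖Complex.exp (-(θ : ℂ) * Complex.I) - 1‖ ^ 2 = 2 - 2 * cos θ := by
  have h : Complex.exp (-(θ : ℂ) * Complex.I) - 1
      = ((cos θ - 1 : ℝ) : ℂ) + ((-sin θ : ℝ) : ℂ) * Complex.I := by
    rw [Complex.exp_mul_I, Complex.cos_neg, Complex.sin_neg, ← Complex.ofReal_cos,
      ← Complex.ofReal_sin]
    push_cast
    ring
  rw [h, Complex.norm_add_mul_I, sq_sqrt (by positivity)]
  nlinarith [sin_sq_add_cos_sq θ]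

lemma norm_exp_neg_mul_I_sub_one_div_sq_le (θ : ℝ) :
    ‖(Complex.exp (-(θ : ℂ) * Complex.I) - 1) / ((θ : ℂ) * Complex.I)‖ ^ 2
      ≤ 2 * (1 + (θ / 2) ^ 2)⁻¹ := by
  rw [norm_div, norm_mul, Complex.norm_real, Complex.norm_I, mul_one, div_pow,
    norm_exp_neg_mul_I_sub_one_sq, norm_eq_abs, sq_abs]
  rcases eq_or_ne θ 0 with rfl | hθ
  · simp
  rw [div_le_iff₀ (by positivity)]
  field_simp
  nlinarith [one_sub_sq_div_two_le_cos (x := θ), neg_one_le_cos θ, sq_nonneg θ]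

lemma exists_measureReal_Icc_le_rpow {μ : Measure ℝ} [IsFiniteMeasure μ] {x C r₀ s : ℝ}
    (hC : 0 < C) (hr₀ : 0 < r₀) (hs : 0 ≤ s)
    (h : ∀ r, 0 < r → r ≤ r₀ → μ.real (Icc (x - r) (x + r)) ≤ C * r ^ s) :
    ∃ C₁, 0 < C₁ ∧ ∀ r, 0 < r → μ.real (Icc (x - r) (x + r)) ≤ C₁ * r ^ s := by
  refine ⟨max C (μ.real univ / r₀ ^ s), lt_max_of_lt_left hC, fun r hr => ?_⟩
  rcases le_or_gt r r₀ with hle | hgt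
  · exact (h r hr hle).trans (by gcongr; exact le_max_left _ _)
  · calc μ.real (Icc (x - r) (x + r)) ≤ μ.real univ := measureReal_mono (subset_univ _)
      _ = μ.real univ / r₀ ^ s * r₀ ^ s := by field_simp
      _ ≤ max C (μ.real univ / r₀ ^ s) * r ^ s := by gcongr; exact le_max_right _ _

lemma lintegral_Ioc_zero_one_ofReal_rpow_neg {β : ℝ} (hβ : β < 1) :
    ∫⁻ t in Ioc 0 1, ENNReal.ofReal (t ^ (-β)) = ENNReal.ofReal (1 - β)⁻¹ := by
  rw [← ofReal_integral_eq_lintegral_ofReal, ← intervalIntegral.integral_of_le zero_le_one,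
    integral_rpow (.inl (by linarith)), zero_rpow (by linarith), one_rpow]
  · congr 1; ring
  · exact (intervalIntegral.intervalIntegrable_rpow' (by linarith)).1
  · filter_upwards [ae_restrict_mem measurableSet_Ioc] with t ht
    exact rpow_nonneg ht.1.le _

lemma setOf_lt_inv_one_add_mul_sub_sq_subset_Icc {x b t : ℝ} (hb : 0 < b) (ht : 0 < t) :
    {ξ | t < (1 + (b * (x - ξ)) ^ 2)⁻¹} ⊆ Icc (x - (b * √t)⁻¹) (x + (b * √t)⁻¹) := by
  intro ξ hξ
  have hpos : 0 < 1 + (b * (x - ξ)) ^ 2 := by positivity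
  have hlt : t * (1 + (b * (x - ξ)) ^ 2) < 1 := by
    simpa [hpos.ne'] using mul_lt_mul_of_pos_right (show t < _ from hξ) hpos
  have hsq : (x - ξ) ^ 2 ≤ ((b * √t)⁻¹) ^ 2 := by
    rw [inv_pow, mul_pow, sq_sqrt ht.le, ← one_div, le_div_iff₀ (by positivity)]
    nlinarith
  have := abs_le_of_sq_le_sq' hsq (by positivity)
  constructor <;> linarith [this.1, this.2]

lemma measure_setOf_lt_inv_one_add_mul_sub_sq_le {μ : Measure ℝ} [IsFiniteMeasure μ] {x c b β t : ℝ}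
    (hb : 0 < b) (ht : 0 < t)
    (h : ∀ r, 0 < r → μ.real (Icc (x - r) (x + r)) ≤ c * r ^ (2 * β)) :
    μ {ξ | t < (1 + (b * (x - ξ)) ^ 2)⁻¹} ≤ ENNReal.ofReal (c * b ^ (-(2 * β)) * t ^ (-β)) := by
  have hr : ((b * √t)⁻¹) ^ (2 * β) = b ^ (-(2 * β)) * t ^ (-β) := by
    rw [inv_rpow (by positivity), mul_rpow hb.le (sqrt_nonneg t), sqrt_eq_rpow,
      ← rpow_mul ht.le, rpow_neg hb.le, rpow_neg ht.le, mul_inv]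
    ring_nf
  calc μ {ξ | t < (1 + (b * (x - ξ)) ^ 2)⁻¹}
      ≤ μ (Icc (x - (b * √t)⁻¹) (x + (b * √t)⁻¹)) :=
        measure_mono (setOf_lt_inv_one_add_mul_sub_sq_subset_Icc hb ht)
    _ ≤ ENNReal.ofReal (c * ((b * √t)⁻¹) ^ (2 * β)) :=
        (ENNReal.le_ofReal_iff_toReal_le (measure_ne_top _ _)
          ((measureReal_nonneg).trans (h _ (by positivity)))).2 (h _ (by positivity))
    _ = ENNReal.ofReal (c * b ^ (-(2 * β)) * t ^ (-β)) := by rw [hr, mul_assoc]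

lemma integrable_inv_one_add_mul_sub_sq (μ : Measure ℝ) [IsFiniteMeasure μ] (x b : ℝ) :
    Integrable (fun ξ => (1 + (b * (x - ξ)) ^ 2)⁻¹) μ :=
  (integrable_const 1).mono' (by fun_prop) (ae_of_all _ fun ξ => by
    rw [norm_of_nonneg (by positivity)]
    exact inv_le_one_of_one_le₀ (by nlinarith))

lemma integral_inv_one_add_mul_sub_sq_le {μ : Measure ℝ} [IsFiniteMeasure μ] {x c b β : ℝ}
    (hb : 0 < b) (hβ : β < 1)
    (h : ∀ r, 0 < r → μ.real (Icc (x - r) (x + r)) ≤ c * r ^ (2 * β)) :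
    ∫ ξ, (1 + (b * (x - ξ)) ^ 2)⁻¹ ∂μ ≤ c * b ^ (-(2 * β)) / (1 - β) := by
  set f : ℝ → ℝ := fun ξ => (1 + (b * (x - ξ)) ^ 2)⁻¹
  set c' := c * b ^ (-(2 * β))
  have hc : 0 ≤ c := by simpa using measureReal_nonneg.trans (h 1 one_pos)
  have hf0 : 0 ≤ f := fun ξ => by positivity
  have hf : Measurable f := by fun_prop
  have hlevel : ∀ t ∈ Ioi (0 : ℝ), μ {ξ | t < f ξ} ≤
      (Ioc 0 1).indicator (fun t => ENNReal.ofReal c' * ENNReal.ofReal (t ^ (-β))) t := by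
    intro t (ht : 0 < t)
    rcases le_or_gt t 1 with h1 | h1
    · rw [indicator_of_mem (show t ∈ Ioc 0 1 from ⟨ht, h1⟩), ← ENNReal.ofReal_mul (by positivity)]
      exact measure_setOf_lt_inv_one_add_mul_sub_sq_le hb ht h
    · have hempty : {ξ | t < f ξ} = ∅ := eq_empty_of_forall_notMem fun ξ (hξ : t < f ξ) =>
        hξ.not_ge (h1.le.trans' (inv_le_one_of_one_le₀ (by nlinarith)))
      rw [hempty, measure_empty]
      exact bot_le
  rw [integral_eq_lintegral_of_nonneg_ae (ae_of_all _ hf0) hf.aestronglyMeasurable]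
  apply ENNReal.toReal_le_of_le_ofReal (div_nonneg (by positivity) (sub_pos.2 hβ).le)
  calc ∫⁻ ξ, ENNReal.ofReal (f ξ) ∂μ = ∫⁻ t in Ioi 0, μ {ξ | t < f ξ} :=
        lintegral_eq_lintegral_meas_lt μ (ae_of_all _ hf0) hf.aemeasurable
    _ ≤ ∫⁻ t in Ioi 0, (Ioc 0 1).indicator
          (fun t => ENNReal.ofReal c' * ENNReal.ofReal (t ^ (-β))) t :=
        setLIntegral_mono' measurableSet_Ioi hlevel
    _ = ENNReal.ofReal c' * ∫⁻ t in Ioc 0 1, ENNReal.ofReal (t ^ (-β)) := by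
        rw [lintegral_indicator measurableSet_Ioc, Measure.restrict_restrict measurableSet_Ioc,
          Ioc_inter_Ioi, max_self, lintegral_const_mul' _ _ ENNReal.ofReal_ne_top]
    _ = ENNReal.ofReal (c' / (1 - β)) := by
        rw [lintegral_Ioc_zero_one_ofReal_rpow_neg hβ, ← ENNReal.ofReal_mul (by positivity),
          div_eq_mul_inv]

theorem stmt4_general (σ : Measure ℝ) [IsFiniteMeasure σ] (lam : ℝ)
    (K : ℝ → ℝ → ℝ)
    (hKdiag : ∀ T : ℝ, K T lam = 1)
    (hKoff : ∀ T ξ : ℝ, ξ ≠ lam →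
      K T ξ = ‖(Complex.exp (-(((2 * π * (lam - ξ) * T : ℝ) : ℂ)) * Complex.I) - 1) /
        (((2 * π * (lam - ξ) * T : ℝ) : ℂ) * Complex.I)‖ ^ 2)
    (C r0 β : ℝ) (hC : 0 < C) (hr0 : 0 < r0) (hβ0 : 0 ≤ β) (hβ : β < 1)
    (hσ : ∀ r : ℝ, 0 < r → r ≤ r0 →
      (σ (Icc (lam - r) (lam + r))).toReal ≤ C * r ^ (2 * β)) :
    ∃ C' : ℝ, 0 < C' ∧ ∀ T : ℝ, 1 / r0 ≤ T →
      T ^ 2 * ∫ ξ : ℝ, K T ξ ∂σ ≤ C' * T ^ (2 * (1 - β)) := by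
  obtain ⟨C₁, hC₁, hσ₁⟩ := exists_measureReal_Icc_le_rpow hC hr0 (by positivity) hσ
  have h1β : 0 < 1 - β := sub_pos.2 hβ
  refine ⟨2 * C₁ * π ^ (-(2 * β)) / (1 - β), by positivity, fun T hT => ?_⟩
  have hT : 0 < T := (one_div_pos.2 hr0).trans_le hT
  have hK : ∀ ξ, K T ξ ≤ 2 * (1 + (π * T * (lam - ξ)) ^ 2)⁻¹ := by
    intro ξ
    rcases eq_or_ne ξ lam with rfl | hξ
    · norm_num [hKdiag]
    · rw [hKoff T ξ hξ]
      convert norm_exp_neg_mul_I_sub_one_div_sq_le (2 * π * (lam - ξ) * T) using 4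
      ring
  have hK0 : ∀ ξ, 0 ≤ K T ξ := by
    intro ξ
    rcases eq_or_ne ξ lam with rfl | hξ
    · simp [hKdiag]
    · rw [hKoff T ξ hξ]; positivity
  calc T ^ 2 * ∫ ξ, K T ξ ∂σ ≤ T ^ 2 * (2 * ∫ ξ, (1 + (π * T * (lam - ξ)) ^ 2)⁻¹ ∂σ) := by
        rw [← integral_const_mul (2 : ℝ)]
        refine mul_le_mul_of_nonneg_left ?_ (sq_nonneg T)
        exact integral_mono_of_nonneg (ae_of_all _ hK0)
          ((integrable_inv_one_add_mul_sub_sq σ lam (π * T)).const_mul 2) (ae_of_all _ hK)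
    _ ≤ T ^ 2 * (2 * (C₁ * (π * T) ^ (-(2 * β)) / (1 - β))) := by
        gcongr
        exact integral_inv_one_add_mul_sub_sq_le (by positivity) hβ hσ₁
    _ = 2 * C₁ * π ^ (-(2 * β)) / (1 - β) * T ^ (2 * (1 - β)) := by
        rw [mul_rpow pi_pos.le hT.le, mul_sub, mul_one, rpow_sub hT, rpow_neg hT.le, rpow_two]
        field_simp

/-- If the finite measure `σ` satisfies `σ([λ-r, λ+r]) ≤ C r^{2β}` for
`0 < r ≤ r₀` with `0 ≤ β ≤ 1`, `β < 1`, then there is `C' > 0` such that for all `T ≥ 1/r₀`,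
`T² ∫ |(e^{-2πi(λ-ξ)T} - 1)/(2πi(λ-ξ)T)|² dσ(ξ) ≤ C' T^{2(1-β)}`
(the integrand, the kernel `K T ξ`, takes the value `1` at `ξ = λ`). -/
theorem stmt4 (σ : Measure ℝ) [IsFiniteMeasure σ] (lam : ℝ)
    (K : ℝ → ℝ → ℝ)
    (hKdiag : ∀ T : ℝ, K T lam = 1)
    (hKoff : ∀ T ξ : ℝ, ξ ≠ lam →
      K T ξ = ‖(Complex.exp (-(((2 * π * (lam - ξ) * T : ℝ) : ℂ)) * Complex.I) - 1) /
        (((2 * π * (lam - ξ) * T : ℝ) : ℂ) * Complex.I)‖ ^ 2)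
    (C r0 β : ℝ) (hC : 0 < C) (hr0 : 0 < r0) (hβ0 : 0 ≤ β) (hβ1 : β ≤ 1) (hβ : β < 1)
    (hσ : ∀ r : ℝ, 0 < r → r ≤ r0 →
      (σ (Icc (lam - r) (lam + r))).toReal ≤ C * r ^ (2 * β)) :
    ∃ C' : ℝ, 0 < C' ∧ ∀ T : ℝ, 1 / r0 ≤ T →
      T ^ 2 * ∫ ξ : ℝ, K T ξ ∂σ ≤ C' * T ^ (2 * (1 - β)) :=
  stmt4_general σ lam K hKdiag hKoff C r0 β hC hr0 hβ0 hβ hσ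
end

section
/- Let $(\phi_t)$ be a measure-preserving flow on a probability space $(M,\mu)$ and $f, g\in L^2(M,\mu)$ with joint spectral measure $\sigma_{f,g}$ and individual spectral measures $\sigma_f, \sigma_g$. Suppose there exist $\alpha, \beta > 0$ and a constant $I > 1$ such that for all $\lambda \in \mathbb{R}\setminus\{0\}$ and all $T > 1$, $\|\int_0^T e^{2\pi i\lambda t} f\circ\phi_t\,dt\|_{L^2} \le I |\lambda|^{-\beta} T^{1-\alpha}$, and also $\|\int_0^T f\circ\phi_t\,dt\|_{L^2} \le I\, T^{1-\alpha}$. Then there exist constants $\alpha' = \alpha'(\alpha,\beta) > 0$ and $C>0$ such that for all $T > 1$: $\frac{1}{T}\int_0^T |\langle f\circ\phi_t, g\rangle_{L^2}|^2\, dt \le C\, I\, \|f\|_{L^2}\, \|g\|_{L^2}^2\, T^{-\alpha'}$. -/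
/-!
Cut the frequency line at `|λ| = 1/(2S)` with `S = T^η`. Since `F 0 S²` is the integral of
the Fejér kernel `(S sinc(πξS))²` against `σ_f`, and the kernel is at least `(2S/π)²` on the low
frequencies, the bound on `F 0 S` gives `σ_f = O(S^{-2α})` there, hence `|σ_{f,g}| = O(S^{-α})`;
the twisted correlation integral is trivially `O(T)`. On the high frequencies the twisted bound
gives `O(S^β T^{1-α})` against total mass `‖f‖‖g‖`. Since `βη < α`, both terms save a power of `T`.
-/

open MeasureTheory Real Set Metric

theorem norm_exp_sub_one_div_eq_abs_mul_sinc (T ξ : ℝ) (hξ : ξ ≠ 0) :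
    ‖(Complex.exp (((2 * π * ξ * T : ℝ) : ℂ) * Complex.I) - 1) /
      (((2 * π * ξ : ℝ) : ℂ) * Complex.I)‖ = |T * sinc (π * ξ * T)| := by
  rw [norm_div, mul_comm _ Complex.I, Complex.norm_exp_I_mul_ofReal_sub_one]
  simp only [norm_mul, Complex.norm_I, mul_one, Complex.norm_real, norm_eq_abs]
  rcases eq_or_ne T 0 with rfl | hT
  · simp
  rw [sinc_of_ne_zero (by positivity), show 2 * π * ξ * T / 2 = π * ξ * T by ring,
    show T * (sin (π * ξ * T) / (π * ξ * T)) = 2 * sin (π * ξ * T) / (2 * π * ξ) by field_simp]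
  simp only [abs_div, abs_mul]

theorem two_div_pi_le_sinc {x : ℝ} (hx : |x| ≤ π / 2) : 2 / π ≤ sinc x := by
  wlog h : 0 ≤ x
  · simpa [sinc_neg] using this (x := -x) (by rwa [abs_neg]) (by linarith)
  rcases h.eq_or_lt with rfl | hpos
  · rw [sinc_zero, div_le_one pi_pos]; exact two_le_pi
  · rw [sinc_of_ne_zero hpos.ne', le_div_iff₀ hpos]
    exact mul_le_sin h (abs_of_nonneg h ▸ hx)

theorem sq_mul_measureReal_closedBall_le_integral (σ : Measure ℝ) [IsFiniteMeasure σ] {S : ℝ}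
    (hS : 0 < S) :
    (2 * S / π) ^ 2 * σ.real (closedBall 0 (1 / (2 * S))) ≤
      ∫ ξ, (S * sinc (π * ξ * S)) ^ 2 ∂σ := by
  have hint : Integrable (fun ξ => (S * sinc (π * ξ * S)) ^ 2) σ := by
    refine (integrable_const (S ^ 2)).mono' (by fun_prop) (ae_of_all _ fun ξ => ?_)
    rw [norm_pow, norm_mul, norm_eq_abs, norm_eq_abs, abs_of_pos hS, mul_pow]
    exact mul_le_of_le_one_right (sq_nonneg S) (by simpa using abs_sinc_le_one (π * ξ * S))
  -- Markov's inequality; Jordan's inequality puts the ball inside the superlevel set.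
  refine le_trans ?_ (mul_meas_ge_le_integral_of_nonneg (ae_of_all _ fun _ => sq_nonneg _) hint
    ((2 * S / π) ^ 2))
  refine mul_le_mul_of_nonneg_left (measureReal_mono fun ξ hξ => ?_) (by positivity)
  rw [mem_closedBall_zero_iff, norm_eq_abs] at hξ
  have hx : |π * ξ * S| ≤ π / 2 := by
    rw [abs_mul, abs_mul, abs_of_pos pi_pos, abs_of_pos hS]
    calc π * |ξ| * S ≤ π * (1 / (2 * S)) * S := by gcongr
      _ = π / 2 := by field_simp
  change (2 * S / π) ^ 2 ≤ (S * sinc (π * ξ * S)) ^ 2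
  gcongr
  calc 2 * S / π = S * (2 / π) := by ring
    _ ≤ S * sinc (π * ξ * S) := by gcongr; exact two_div_pi_le_sinc hx

theorem integral_le_mul_measureReal_add_mul_measureReal {α : Type*} [MeasurableSpace α]
    {μ : Measure α} [IsFiniteMeasure μ] {f : α → ℝ} {s : Set α} {a b : ℝ}
    (hs : MeasurableSet s) (hf : 0 ≤ f) (ha : ∀ x ∈ s, f x ≤ a) (hb : ∀ x ∉ s, f x ≤ b) :
    ∫ x, f x ∂μ ≤ a * μ.real s + b * μ.real sᶜ := by
  classical
  calc ∫ x, f x ∂μ ≤ ∫ x, s.piecewise (fun _ => a) (fun _ => b) x ∂μ := by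
        refine integral_mono_of_nonneg (ae_of_all _ hf) (Integrable.piecewise hs
          (integrable_const a).integrableOn (integrable_const b).integrableOn) (ae_of_all _ fun x => ?_)
        by_cases hx : x ∈ s
        · simpa [hx] using ha x hx
        · simpa [hx] using hb x hx
    _ = a * μ.real s + b * μ.real sᶜ := by
        rw [integral_piecewise hs (integrable_const a).integrableOn (integrable_const b).integrableOn,
          setIntegral_const, setIntegral_const, smul_eq_mul, smul_eq_mul, mul_comm a, mul_comm b]

theorem norm_integral_exp_mul_I_mul_le {g : ℝ → ℂ} {M T : ℝ} (θ : ℝ → ℝ) (hg : ∀ t, ‖g t‖ ≤ M)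
    (hT : 0 ≤ T) :
    ‖∫ t in (0:ℝ)..T, Complex.exp ((θ t : ℂ) * Complex.I) * g t‖ ≤ M * T := by
  simpa [abs_of_nonneg hT] using intervalIntegral.norm_integral_le_of_norm_le_const
    (a := 0) (b := T) fun t _ => by rw [norm_mul, Complex.norm_exp_ofReal_mul_I, one_mul]; exact hg t

theorem one_div_mul_le_rpow_neg_min {T η α β : ℝ} (hT : 1 ≤ T) :
    1 / T * (π / 2 * T * (T ^ η) ^ (-α) + (2 * T ^ η) ^ β * T ^ (1 - α)) ≤
      (π / 2 + 2 ^ β) * T ^ (-min (α - β * η) (α * η)) := by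
  have hT0 : 0 < T := by linarith
  have e₁ : 1 / T * (π / 2 * T * (T ^ η) ^ (-α)) = π / 2 * T ^ (-(α * η)) := by
    rw [← rpow_mul hT0.le]; field_simp
  have e₂ : 1 / T * ((2 * T ^ η) ^ β * T ^ (1 - α)) = 2 ^ β * T ^ (-(α - β * η)) := by
    rw [mul_rpow (by norm_num) (by positivity), ← rpow_mul hT0.le, mul_assoc, ← rpow_add hT0,
      show η * β + (1 - α) = 1 + -(α - β * η) by ring, rpow_add hT0, rpow_one]
    field_simp
  have h₁ : T ^ (-(α * η)) ≤ T ^ (-min (α - β * η) (α * η)) :=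
    rpow_le_rpow_of_exponent_le hT (neg_le_neg (min_le_right _ _))
  have h₂ : T ^ (-(α - β * η)) ≤ T ^ (-min (α - β * η) (α * η)) :=
    rpow_le_rpow_of_exponent_le hT (neg_le_neg (min_le_left _ _))
  rw [mul_add, e₁, e₂]
  calc π / 2 * T ^ (-(α * η)) + 2 ^ β * T ^ (-(α - β * η))
      ≤ π / 2 * T ^ (-min (α - β * η) (α * η)) + 2 ^ β * T ^ (-min (α - β * η) (α * η)) := by
        gcongr
    _ = _ := by ring

theorem integral_norm_sq_le_of_twisted_bounds (σf σg μ : Measure ℝ)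
    [IsFiniteMeasure σf] [IsFiniteMeasure σg] [IsFiniteMeasure μ]
    {corr : ℝ → ℂ} {F : ℝ → ℝ → ℝ} {nf ng α β I0 T S : ℝ}
    (hnf : 0 ≤ nf) (hng : 0 ≤ ng) (hβ : 0 ≤ β) (hI0 : 0 ≤ I0) (hT : 0 ≤ T) (hS : 0 < S)
    (hσf : σf.real univ = nf ^ 2) (hσg : σg.real univ = ng ^ 2)
    (hμ : ∀ A : Set ℝ, MeasurableSet A → μ.real A ≤ √(σf.real A) * √(σg.real A))
    (hcorr : ∀ t, ‖corr t‖ ≤ nf * ng)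
    (hF0nn : 0 ≤ F 0 S) (hspec : F 0 S ^ 2 = ∫ ξ, (S * sinc (π * ξ * S)) ^ 2 ∂σf)
    (hdom : ∀ lam : ℝ,
      ‖∫ t in (0:ℝ)..T, Complex.exp (((2 * π * lam * t : ℝ) : ℂ) * Complex.I) * corr t‖ ≤
        ng * F lam T)
    (hident : (∫ t in (0:ℝ)..T, ‖corr t‖ ^ 2) ≤
      ∫ lam : ℝ,
        ‖∫ t in (0:ℝ)..T, Complex.exp (((2 * π * lam * t : ℝ) : ℂ) * Complex.I) * corr t‖ ∂μ)
    (hF : ∀ lam : ℝ, lam ≠ 0 → F lam T ≤ I0 * |lam| ^ (-β) * T ^ (1 - α))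
    (hF0 : F 0 S ≤ I0 * S ^ (1 - α)) :
    ∫ t in (0:ℝ)..T, ‖corr t‖ ^ 2 ≤
      I0 * nf * ng ^ 2 * (π / 2 * T * S ^ (-α) + (2 * S) ^ β * T ^ (1 - α)) := by
  set B := closedBall (0:ℝ) (1 / (2 * S))
  have hσfB : √(σf.real B) ≤ π / 2 * I0 * S ^ (-α) := by
    have h : 2 * S / π * √(σf.real B) ≤ I0 * S ^ (1 - α) :=
      calc 2 * S / π * √(σf.real B) = √((2 * S / π) ^ 2 * σf.real B) := by
            rw [sqrt_mul (by positivity), sqrt_sq (by positivity)]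
        _ ≤ √(F 0 S ^ 2) := by
            gcongr; rw [hspec]; exact sq_mul_measureReal_closedBall_le_integral σf hS
        _ = F 0 S := sqrt_sq hF0nn
        _ ≤ I0 * S ^ (1 - α) := hF0
    rw [rpow_sub hS, rpow_one, ← le_div_iff₀' (by positivity)] at h
    calc √(σf.real B) ≤ I0 * (S / S ^ α) / (2 * S / π) := h
      _ = π / 2 * I0 * S ^ (-α) := by rw [rpow_neg hS.le]; field_simp
  have hσgB : √(σg.real B) ≤ ng := by
    rw [← sqrt_sq hng, ← hσg]; exact sqrt_le_sqrt (measureReal_mono (subset_univ _))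
  have hμB : μ.real B ≤ π / 2 * I0 * S ^ (-α) * ng :=
    (hμ B measurableSet_closedBall).trans
      (mul_le_mul hσfB hσgB (sqrt_nonneg _) (by positivity))
  have hμBc : μ.real Bᶜ ≤ nf * ng := by
    refine (measureReal_mono (subset_univ _)).trans ((hμ univ .univ).trans_eq ?_)
    rw [hσf, hσg, sqrt_sq hnf, sqrt_sq hng]
  have hhigh : ∀ lam ∉ B,
      ‖∫ t in (0:ℝ)..T, Complex.exp (((2 * π * lam * t : ℝ) : ℂ) * Complex.I) * corr t‖ ≤
        ng * (I0 * (2 * S) ^ β * T ^ (1 - α)) := by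
    intro lam hlam
    rw [mem_closedBall_zero_iff, norm_eq_abs, not_le] at hlam
    have hlam0 : lam ≠ 0 := abs_pos.mp ((by positivity : (0:ℝ) < 1 / (2 * S)).trans hlam)
    have hpow : |lam| ^ (-β) ≤ (2 * S) ^ β := by
      rw [← inv_inv (2 * S), inv_rpow (by positivity), ← rpow_neg (by positivity), ← one_div]
      exact rpow_le_rpow_of_nonpos (by positivity) hlam.le (neg_nonpos.2 hβ)
    calc _ ≤ ng * F lam T := hdom lam
      _ ≤ ng * (I0 * |lam| ^ (-β) * T ^ (1 - α)) := by gcongr; exact hF lam hlam0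
      _ ≤ ng * (I0 * (2 * S) ^ β * T ^ (1 - α)) := by gcongr
  calc ∫ t in (0:ℝ)..T, ‖corr t‖ ^ 2
      ≤ nf * ng * T * μ.real B + ng * (I0 * (2 * S) ^ β * T ^ (1 - α)) * μ.real Bᶜ :=
        hident.trans <| integral_le_mul_measureReal_add_mul_measureReal measurableSet_closedBall
          (fun _ => norm_nonneg _) (fun _ _ => norm_integral_exp_mul_I_mul_le _ hcorr hT) hhigh
    _ ≤ nf * ng * T * (π / 2 * I0 * S ^ (-α) * ng) +
          ng * (I0 * (2 * S) ^ β * T ^ (1 - α)) * (nf * ng) := by gcongr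
    _ = _ := by ring

/-- effective weak mixing from twisted ergodic integral bounds.
Abstract formalization: `corr t = ⟨f ∘ φ_t, g⟩`, `F λ T = ‖∫₀ᵀ e^{2πiλt} f∘φ_t dt‖`,
`σf, σg` the spectral measures of `f, g` and `μ = |σ_{f,g}|` the total variation of the joint
spectral measure, with the standard identities (Cauchy–Schwarz for spectral measures, the
spectral identity for `F 0`, Hölder domination and the correlation identity) taken as
hypotheses, as indicated in the paper. If `F λ T ≤ I |λ|^{-β} T^{1-α}` for `λ ≠ 0` and
`F 0 T ≤ I T^{1-α}`, then there exist `α' > 0` and `C > 0` such that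
`(1/T) ∫₀ᵀ |⟨f∘φ_t, g⟩|² dt ≤ C I ‖f‖ ‖g‖² T^{-α'}` for all `T > 1`. -/
theorem stmt5 (σf σg μ : Measure ℝ)
    [IsFiniteMeasure σf] [IsFiniteMeasure σg] [IsFiniteMeasure μ]
    (corr : ℝ → ℂ) (F : ℝ → ℝ → ℝ) (K : ℝ → ℝ → ℝ)
    (nf ng : ℝ) (hnf : 0 ≤ nf) (hng : 0 ≤ ng)
    (α β I0 : ℝ) (hα : 0 < α) (hβ : 0 < β) (hI : 1 < I0)
    (hσf : (σf Set.univ).toReal = nf ^ 2)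
    (hσg : (σg Set.univ).toReal = ng ^ 2)
    (hμ : ∀ A : Set ℝ, MeasurableSet A →
      (μ A).toReal ≤ Real.sqrt ((σf A).toReal) * Real.sqrt ((σg A).toReal))
    (hcorr : ∀ t : ℝ, ‖corr t‖ ≤ nf * ng)
    (hFnn : ∀ lam T : ℝ, 0 ≤ F lam T)
    (hKdiag : ∀ T : ℝ, K T 0 = T ^ 2)
    (hKoff : ∀ T ξ : ℝ, ξ ≠ 0 →
      K T ξ = ‖(Complex.exp ((((2 * π * ξ * T : ℝ) : ℂ)) * Complex.I) - 1) /
        (((2 * π * ξ : ℝ) : ℂ) * Complex.I)‖ ^ 2)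
    (hspec : ∀ T : ℝ, 0 < T → F 0 T ^ 2 = ∫ ξ : ℝ, K T ξ ∂σf)
    (hdom : ∀ lam T : ℝ,
      ‖∫ t in (0:ℝ)..T, Complex.exp (((2 * π * lam * t : ℝ) : ℂ) * Complex.I) * corr t‖ ≤
        ng * F lam T)
    (hident : ∀ T : ℝ, 1 < T →
      (∫ t in (0:ℝ)..T, ‖corr t‖ ^ 2) ≤
        ∫ lam : ℝ,
          ‖∫ t in (0:ℝ)..T, Complex.exp (((2 * π * lam * t : ℝ) : ℂ) * Complex.I) * corr t‖ ∂μ)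
    (hF : ∀ lam : ℝ, lam ≠ 0 → ∀ T : ℝ, 1 < T → F lam T ≤ I0 * |lam| ^ (-β) * T ^ (1 - α))
    (hF0 : ∀ T : ℝ, 1 < T → F 0 T ≤ I0 * T ^ (1 - α)) :
    ∃ α' : ℝ, 0 < α' ∧ ∃ C : ℝ, 0 < C ∧ ∀ T : ℝ, 1 < T →
      (1 / T) * ∫ t in (0:ℝ)..T, ‖corr t‖ ^ 2 ≤ C * I0 * nf * ng ^ 2 * T ^ (-α') := by
  have hK : ∀ T ξ, K T ξ = (T * sinc (π * ξ * T)) ^ 2 := fun T ξ => by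
    rcases eq_or_ne ξ 0 with rfl | hξ
    · simp [hKdiag]
    · rw [hKoff T ξ hξ, norm_exp_sub_one_div_eq_abs_mul_sinc T ξ hξ, sq_abs]
  obtain ⟨η, hη, hβη⟩ : ∃ η, 0 < η ∧ β * η = α / 2 := ⟨α / (2 * β), by positivity, by field_simp⟩
  refine ⟨min (α - β * η) (α * η), lt_min (by linarith) (by positivity), π / 2 + 2 ^ β,
    by positivity, fun T hT => ?_⟩
  have hS : 1 < T ^ η := one_lt_rpow hT (by positivity)
  have hcorrT := integral_norm_sq_le_of_twisted_bounds σf σg μ hnf hng hβ.le (by linarith)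
    (by linarith) (by linarith) hσf hσg hμ hcorr (hFnn 0 _)
    (by simpa only [hK] using hspec _ (by linarith)) (fun lam => hdom lam T) (hident T hT)
    (fun lam hlam => hF lam hlam T hT) (hF0 _ hS)
  calc 1 / T * ∫ t in (0:ℝ)..T, ‖corr t‖ ^ 2
      ≤ I0 * nf * ng ^ 2 *
          (1 / T * (π / 2 * T * (T ^ η) ^ (-α) + (2 * T ^ η) ^ β * T ^ (1 - α))) := by
        rw [mul_left_comm]; gcongr
    _ ≤ I0 * nf * ng ^ 2 * ((π / 2 + 2 ^ β) * T ^ (-min (α - β * η) (α * η))) :=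
        mul_le_mul_of_nonneg_left (one_div_mul_le_rpow_neg_min hT.le) (by positivity)
    _ = _ := by ring
end
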